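/- Let N = 4m where m ≡ 7 (mod 12) is a positive integer all of whose prime divisors are congruent to 1 or 7 mod 12. Then the number of pairs of coprime integers (p,q) with N = p² + 12q², 4 | p, and 3 ∤ p is exactly 2^{τ(N)}, where τ(N) is the number of distinct prime divisors of N. -/

import Mathlib

/-!
In the Euclidean ring `ℤ[ω]` of Eisenstein integers a prime `p ≡ 1 (mod 3)` splits as `π π̄` with
`π ∤ π̄`. Hence a primitive element of norm `p ^ e * k`, `e > 0`, `p ∤ k`, is `π ^ e β` or
`π̄ ^ e β` with `β` primitive of norm `k`, but not both; so if every prime factor of `m` is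
`1 (mod 3)` there are `6 * 2 ^ r` primitive elements of norm `m`, where `r` is the number of prime
factors of `m` and `6` the number of units.
The `b`-coordinates of `α = a + b ω`, `ω² α`, `ω α` are `b`, `-a`, `a - b`, so for primitive `α`
exactly one of them is even, i.e. lies in `ℤ[√-3]`. For `m ≡ 7 (mod 12)` the primitive
`x + y √-3` of norm `m = x² + 3 y²` correspond to the pairs `(p, q) = (2 x, y)`, for which
`4 ∣ p` and `3 ∤ p` hold automatically.
-/

theorem two_mul_abs_sub_mul_round_le (w : ℤ) {n : ℤ} (hn : 0 < n) :
    2 * |w - n * round ((w : ℚ) / n)| ≤ n := by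
  have hn' : (0 : ℚ) < n := by exact_mod_cast hn
  have hw : ((w - n * round ((w : ℚ) / n) : ℤ) : ℚ) = n * ((w : ℚ) / n - round ((w : ℚ) / n)) := by
    push_cast; field_simp
  have h : (2 * |((w - n * round ((w : ℚ) / n) : ℤ) : ℚ)|) ≤ n := by
    rw [hw, abs_mul, abs_of_pos hn']
    nlinarith [abs_sub_round ((w : ℚ) / n)]
  exact_mod_cast h

theorem four_mul_sq_sub_mul_add_sq_le {u v n : ℤ} (hu : 2 * |u| ≤ n) (hv : 2 * |v| ≤ n) :
    4 * (u ^ 2 - u * v + v ^ 2) ≤ 3 * n ^ 2 := by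
  obtain ⟨hu1, hu2⟩ := abs_le.1 (show |2 * u| ≤ n by rwa [abs_mul, abs_two])
  obtain ⟨hv1, hv2⟩ := abs_le.1 (show |2 * v| ≤ n by rwa [abs_mul, abs_two])
  nlinarith

theorem exists_dvd_sq_add_add_one {p : ℕ} (hp : p.Prime) (hp3 : p % 3 = 1) :
    ∃ z : ℤ, (p : ℤ) ∣ z ^ 2 + z + 1 := by
  have := Fact.mk hp
  have := Fact.mk Nat.prime_three
  obtain ⟨g, hg⟩ := exists_prime_orderOf_dvd_card (G := (ZMod p)ˣ) 3
    (by rw [ZMod.card_units_eq_totient, Nat.totient_prime hp]; omega)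
  have hg3 : (g : ZMod p) ^ 3 = 1 := by
    rw [← Units.val_pow_eq_pow_val, ← hg, pow_orderOf_eq_one, Units.val_one]
  have hg1 : (g : ZMod p) - 1 ≠ 0 := fun h => by
    rw [sub_eq_zero, Units.val_eq_one] at h
    rw [h, orderOf_one] at hg
    omega
  have hroot : (g : ZMod p) ^ 2 + g + 1 = 0 :=
    (mul_eq_zero.1 (by linear_combination hg3)).resolve_left hg1
  refine ⟨(g : ZMod p).val, ?_⟩
  rw [← ZMod.intCast_zmod_eq_zero_iff_dvd]
  push_cast
  rw [ZMod.natCast_zmod_val, hroot]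

theorem Nat.primeFactors_four_mul {m : ℕ} (hm : m % 2 = 1) :
    (4 * m).primeFactors = insert 2 m.primeFactors := by
  rw [Nat.primeFactors_mul (by norm_num) (by omega), show 4 = 2 ^ 2 from rfl,
    Nat.primeFactors_prime_pow (by norm_num) Nat.prime_two, Finset.singleton_union]

/-- `⟨a, b⟩` stands for `a + b ω`, where `ω ^ 2 = -1 - ω`. -/
@[ext]
structure EisensteinInt where
  a : ℤ
  b : ℤ
deriving DecidableEq

notation "ℤ[ω]" => EisensteinInt

namespace EisensteinInt

instance : Zero ℤ[ω] := ⟨⟨0, 0⟩⟩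
instance : One ℤ[ω] := ⟨⟨1, 0⟩⟩
instance : Add ℤ[ω] := ⟨fun x y => ⟨x.a + y.a, x.b + y.b⟩⟩
instance : Neg ℤ[ω] := ⟨fun x => ⟨-x.a, -x.b⟩⟩
instance : Sub ℤ[ω] := ⟨fun x y => ⟨x.a - y.a, x.b - y.b⟩⟩
instance : Mul ℤ[ω] := ⟨fun x y => ⟨x.a * y.a - x.b * y.b, x.a * y.b + x.b * y.a - x.b * y.b⟩⟩
instance : NatCast ℤ[ω] := ⟨fun n => ⟨n, 0⟩⟩
instance : IntCast ℤ[ω] := ⟨fun n => ⟨n, 0⟩⟩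

@[simp] theorem zero_a : (0 : ℤ[ω]).a = 0 := rfl
@[simp] theorem zero_b : (0 : ℤ[ω]).b = 0 := rfl
@[simp] theorem one_a : (1 : ℤ[ω]).a = 1 := rfl
@[simp] theorem one_b : (1 : ℤ[ω]).b = 0 := rfl
@[simp] theorem add_a (x y : ℤ[ω]) : (x + y).a = x.a + y.a := rfl
@[simp] theorem add_b (x y : ℤ[ω]) : (x + y).b = x.b + y.b := rfl
@[simp] theorem neg_a (x : ℤ[ω]) : (-x).a = -x.a := rfl
@[simp] theorem neg_b (x : ℤ[ω]) : (-x).b = -x.b := rfl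
@[simp] theorem sub_a (x y : ℤ[ω]) : (x - y).a = x.a - y.a := rfl
@[simp] theorem sub_b (x y : ℤ[ω]) : (x - y).b = x.b - y.b := rfl
@[simp] theorem mul_a (x y : ℤ[ω]) : (x * y).a = x.a * y.a - x.b * y.b := rfl
@[simp] theorem mul_b (x y : ℤ[ω]) : (x * y).b = x.a * y.b + x.b * y.a - x.b * y.b := rfl
@[simp] theorem natCast_a (n : ℕ) : (n : ℤ[ω]).a = n := rfl
@[simp] theorem natCast_b (n : ℕ) : (n : ℤ[ω]).b = 0 := rfl
@[simp] theorem intCast_a (n : ℤ) : (n : ℤ[ω]).a = n := rfl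
@[simp] theorem intCast_b (n : ℤ) : (n : ℤ[ω]).b = 0 := rfl

instance : CommRing ℤ[ω] where
  add_assoc _ _ _ := by ext <;> simp [add_assoc]
  zero_add _ := by ext <;> simp
  add_zero _ := by ext <;> simp
  add_comm _ _ := by ext <;> simp [add_comm]
  neg_add_cancel _ := by ext <;> simp
  sub_eq_add_neg _ _ := by ext <;> simp [sub_eq_add_neg]
  mul_assoc _ _ _ := by ext <;> simp <;> ring
  one_mul _ := by ext <;> simp
  mul_one _ := by ext <;> simp
  left_distrib _ _ _ := by ext <;> simp <;> ring
  right_distrib _ _ _ := by ext <;> simp <;> ring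
  mul_comm _ _ := by ext <;> simp <;> ring
  zero_mul _ := by ext <;> simp
  mul_zero _ := by ext <;> simp
  natCast_zero := by ext <;> simp
  natCast_succ _ := by ext <;> simp
  intCast_ofNat _ := rfl
  intCast_negSucc _ := by ext <;> simp [Int.negSucc_eq]
  nsmul := nsmulRec
  zsmul := zsmulRec

def conj : ℤ[ω] →+* ℤ[ω] where
  toFun x := ⟨x.a - x.b, -x.b⟩
  map_one' := by ext <;> simp
  map_mul' _ _ := by ext <;> simp <;> ring
  map_zero' := by ext <;> simp
  map_add' _ _ := by ext <;> simp <;> ring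

@[simp] theorem conj_a (x : ℤ[ω]) : (conj x).a = x.a - x.b := rfl
@[simp] theorem conj_b (x : ℤ[ω]) : (conj x).b = -x.b := rfl

@[simp] theorem conj_conj (x : ℤ[ω]) : conj (conj x) = x := by ext <;> simp

def norm : ℤ[ω] →* ℤ where
  toFun x := x.a ^ 2 - x.a * x.b + x.b ^ 2
  map_one' := by simp
  map_mul' _ _ := by simp; ring

theorem norm_apply (x : ℤ[ω]) : norm x = x.a ^ 2 - x.a * x.b + x.b ^ 2 := rfl

@[simp] theorem norm_conj (x : ℤ[ω]) : norm (conj x) = norm x := by simp [norm_apply]; ring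

@[simp] theorem norm_intCast (n : ℤ) : norm n = n ^ 2 := by simp [norm_apply]

@[simp] theorem norm_natCast (n : ℕ) : norm n = (n : ℤ) ^ 2 := by simp [norm_apply]

theorem mul_conj (x : ℤ[ω]) : x * conj x = norm x := by
  ext <;> simp only [mul_a, mul_b, conj_a, conj_b, intCast_a, intCast_b, norm_apply] <;> ring

theorem mul_conj_eq_natCast {π : ℤ[ω]} {p : ℕ} (hπ : norm π = p) : π * conj π = p := by
  rw [mul_conj, hπ, Int.cast_natCast]

theorem norm_nonneg (x : ℤ[ω]) : 0 ≤ norm x := by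
  rw [norm_apply]; nlinarith [sq_nonneg (x.a - x.b), sq_nonneg x.a, sq_nonneg x.b]

theorem norm_eq_zero {x : ℤ[ω]} : norm x = 0 ↔ x = 0 := by
  refine ⟨fun h => ?_, fun h => by simp [h, norm_apply]⟩
  rw [norm_apply] at h
  ext <;> simp <;> nlinarith [sq_nonneg (x.a - x.b), sq_nonneg x.a, sq_nonneg x.b]

theorem norm_pos {x : ℤ[ω]} : 0 < norm x ↔ x ≠ 0 := by
  rw [(norm_nonneg x).lt_iff_ne', Ne, norm_eq_zero]

theorem isUnit_iff_norm_eq_one {x : ℤ[ω]} : IsUnit x ↔ norm x = 1 := by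
  refine ⟨fun h => ?_, fun h => IsUnit.of_mul_eq_one (conj x) (by rw [mul_conj, h]; rfl)⟩
  rcases Int.isUnit_iff.1 (h.map norm) with h1 | h1
  · exact h1
  · linarith [norm_nonneg x]

instance : IsLocalHom norm :=
  ⟨fun x h => isUnit_iff_norm_eq_one.2 <| by
    rcases Int.isUnit_iff.1 h with h1 | h1
    · exact h1
    · linarith [norm_nonneg x]⟩

theorem intCast_dvd_iff (n : ℤ) (x : ℤ[ω]) : (n : ℤ[ω]) ∣ x ↔ n ∣ x.a ∧ n ∣ x.b := by
  refine ⟨fun ⟨y, hy⟩ => ⟨⟨y.a, by simp [hy]⟩, ⟨y.b, by simp [hy]⟩⟩, ?_⟩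
  rintro ⟨⟨u, hu⟩, ⟨v, hv⟩⟩
  exact ⟨⟨u, v⟩, by ext <;> simp [hu, hv]⟩

theorem natCast_dvd_iff (n : ℕ) (x : ℤ[ω]) : (n : ℤ[ω]) ∣ x ↔ (n : ℤ) ∣ x.a ∧ (n : ℤ) ∣ x.b := by
  rw [← intCast_dvd_iff]; rfl

noncomputable instance : Div ℤ[ω] :=
  ⟨fun x y => ⟨round (((x * conj y).a : ℚ) / norm y), round (((x * conj y).b : ℚ) / norm y)⟩⟩

noncomputable instance : Mod ℤ[ω] := ⟨fun x y => x - y * (x / y)⟩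

theorem div_a (x y : ℤ[ω]) : (x / y).a = round (((x * conj y).a : ℚ) / norm y) := rfl
theorem div_b (x y : ℤ[ω]) : (x / y).b = round (((x * conj y).b : ℚ) / norm y) := rfl
theorem mod_def (x y : ℤ[ω]) : x % y = x - y * (x / y) := rfl

/- `ȳ (x % y) = x ȳ - N(y) (x / y)` has coordinates of absolute value at most `N(y) / 2`, so its
norm `N(y) N(x % y)` is at most `3/4 N(y)²`. -/
theorem norm_mod_lt (x : ℤ[ω]) {y : ℤ[ω]} (hy : y ≠ 0) : norm (x % y) < norm y := by
  have hn := norm_pos.2 hy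
  have key : conj y * (x % y) = x * conj y - (norm y : ℤ[ω]) * (x / y) := by
    rw [mod_def, ← mul_conj]; ring
  have h := congrArg norm key
  set w := x * conj y
  simp only [map_mul, norm_conj, norm_apply (_ - _), sub_a, sub_b, mul_a (norm y : ℤ[ω]),
    mul_b (norm y : ℤ[ω]), intCast_a, intCast_b, zero_mul, sub_zero, add_zero] at h
  rw [div_a, div_b] at h
  have := four_mul_sq_sub_mul_add_sq_le (two_mul_abs_sub_mul_round_le w.a hn)
    (two_mul_abs_sub_mul_round_le w.b hn)
  nlinarith

noncomputable instance : EuclideanDomain ℤ[ω] where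
  exists_pair_ne := ⟨0, 1, fun h => by simpa using congrArg a h⟩
  quotient := (· / ·)
  remainder := (· % ·)
  quotient_zero x := by ext <;> simp [div_a, div_b]
  quotient_mul_add_remainder_eq x y := by simp [mod_def]
  r x y := (norm x).natAbs < (norm y).natAbs
  r_wellFounded := (measure fun x => (norm x).natAbs).wf
  remainder_lt x y hy := by
    have := norm_mod_lt x hy; have := norm_nonneg (x % y); omega
  mul_left_not_lt x y hy := by
    have := norm_pos.2 hy; have := norm_nonneg x
    rw [map_mul, Int.natAbs_mul, not_lt]
    exact Nat.le_mul_of_pos_right _ (by omega)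

theorem prime_of_norm_eq_prime {π : ℤ[ω]} {p : ℕ} (hp : p.Prime) (hπ : norm π = p) : Prime π :=
  (Irreducible.of_map (f := norm) (hπ ▸ (Nat.prime_iff_prime_int.1 hp).irreducible)).prime

theorem dvd_of_dvd_intCast {π : ℤ[ω]} {p : ℕ} (hp : p.Prime) (hπ : norm π = p) {n : ℤ}
    (h : π ∣ (n : ℤ[ω])) : (p : ℤ) ∣ n := by
  have := map_dvd norm h
  rw [hπ, norm_intCast] at this
  exact (Nat.prime_iff_prime_int.1 hp).dvd_of_dvd_pow this

theorem exists_norm_eq_prime {p : ℕ} (hp : p.Prime) (hp3 : p % 3 = 1) :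
    ∃ π : ℤ[ω], norm π = p := by
  obtain ⟨z, hz⟩ := exists_dvd_sq_add_add_one hp hp3
  -- `p` divides the norm `z² + z + 1` of `z - ω` but neither `z - ω` nor its conjugate,
  -- so `p` is not prime, and a proper factor of `p` has norm `p`.
  have hdvd : (p : ℤ[ω]) ∣ ⟨z, -1⟩ * conj ⟨z, -1⟩ := by
    rw [mul_conj, ← Int.cast_natCast]
    exact Int.cast_dvd_cast _ _ (by simpa [norm_apply] using hz)
  have hp1 : ¬ (p : ℤ) ∣ 1 := by exact_mod_cast hp.not_dvd_one
  have hnprime : ¬ Prime (p : ℤ[ω]) := fun h => by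
    rcases h.dvd_or_dvd hdvd with h | h <;> simp [natCast_dvd_iff, hp1] at h
  have hnunit : ¬ IsUnit (p : ℤ[ω]) := by
    rw [isUnit_iff_norm_eq_one, norm_natCast]
    have := hp.two_le
    nlinarith
  obtain ⟨u, v, huv, hu, hv⟩ : ∃ u v, (p : ℤ[ω]) = u * v ∧ ¬ IsUnit u ∧ ¬ IsUnit v := by
    have := mt Irreducible.prime hnprime
    simp only [irreducible_iff, hnunit, not_false_eq_true, true_and, not_forall] at this
    tauto
  obtain ⟨nu, hnu⟩ := Int.eq_ofNat_of_zero_le (norm_nonneg u)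
  obtain ⟨nv, hnv⟩ := Int.eq_ofNat_of_zero_le (norm_nonneg v)
  rw [isUnit_iff_norm_eq_one, hnu] at hu
  rw [isUnit_iff_norm_eq_one, hnv] at hv
  have huv' : nu * nv = p ^ 2 := by
    have := congrArg norm huv
    rw [map_mul, hnu, hnv, norm_natCast] at this
    exact_mod_cast this.symm
  refine ⟨u, ?_⟩
  rw [hnu, ((hp.mul_eq_prime_sq_iff (by omega) (by omega)).1 huv').1]

theorem not_dvd_conj {π : ℤ[ω]} {p : ℕ} (hp : p.Prime) (hp3 : p ≠ 3) (hπ : norm π = p) :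
    ¬ π ∣ conj π := by
  intro h
  have hsub : π - conj π = (π.b : ℤ[ω]) * ⟨1, 2⟩ := by ext <;> simp; ring
  rcases (prime_of_norm_eq_prime hp hπ).dvd_or_dvd (hsub ▸ dvd_sub dvd_rfl h) with hb | h3
  · have ha : π ∣ (π.a : ℤ[ω]) := by
      have : (π.a : ℤ[ω]) = π - (π.b : ℤ[ω]) * ⟨0, 1⟩ := by ext <;> simp
      exact this ▸ dvd_sub dvd_rfl (dvd_mul_of_dvd_left hb _)
    have hpπ : (p : ℤ[ω]) ∣ π :=
      (natCast_dvd_iff p π).2 ⟨dvd_of_dvd_intCast hp hπ ha, dvd_of_dvd_intCast hp hπ hb⟩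
    have := Int.le_of_dvd (by simp [hπ, hp.pos]) (map_dvd norm hpπ)
    rw [norm_natCast, hπ] at this
    nlinarith [hp.two_le]
  · have := map_dvd norm h3
    rw [hπ, show norm ⟨1, 2⟩ = 3 from rfl] at this
    exact hp3 ((Nat.prime_dvd_prime_iff_eq hp Nat.prime_three).1 (by exact_mod_cast this))

def Primitive (α : ℤ[ω]) : Prop := IsCoprime α.a α.b

theorem primitive_iff {α : ℤ[ω]} : Primitive α ↔ ∀ q : ℕ, q.Prime → ¬ (q : ℤ[ω]) ∣ α := by
  simp only [Primitive, Int.isCoprime_iff_gcd_eq_one, Nat.eq_one_iff_not_exists_prime_dvd,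
    Int.dvd_gcd_iff, natCast_dvd_iff]

theorem Primitive.of_mul_left {α β : ℤ[ω]} (h : Primitive (α * β)) : Primitive β :=
  primitive_iff.2 fun q hq hqβ => primitive_iff.1 h q hq (dvd_mul_of_dvd_right hqβ α)

theorem Primitive.isUnit_mul {α u : ℤ[ω]} (h : Primitive α) (hu : IsUnit u) : Primitive (u * α) :=
  primitive_iff.2 fun q hq hq' => primitive_iff.1 h q hq ((hu.dvd_mul_left).1 hq')

theorem primitive_of_norm_eq_one {α : ℤ[ω]} (h : norm α = 1) : Primitive α :=
  ⟨α.a - α.b, α.b, by rw [← h, norm_apply]; ring⟩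

theorem Primitive.not_two_dvd_and_two_dvd {α : ℤ[ω]} (h : Primitive α) : ¬ (2 ∣ α.a ∧ 2 ∣ α.b) :=
  fun h2 => primitive_iff.1 h 2 Nat.prime_two ((natCast_dvd_iff 2 α).2 h2)

def primitiveOfNorm (n : ℕ) : Set ℤ[ω] := {α | norm α = n ∧ Primitive α}

theorem finite_primitiveOfNorm (n : ℕ) : (primitiveOfNorm n).Finite := by
  refine (((Set.finite_Icc (-(n : ℤ)) n).prod (Set.finite_Icc (-(n : ℤ)) n)).preimage
    (f := fun α : ℤ[ω] => (α.a, α.b)) fun x _ y _ h => ?_).subset fun α ⟨hα, _⟩ => ?_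
  · simp only [Prod.mk.injEq] at h; exact EisensteinInt.ext h.1 h.2
  · rw [norm_apply] at hα
    simp only [Set.mem_preimage, Set.mem_prod, Set.mem_Icc]
    refine ⟨⟨?_, ?_⟩, ?_, ?_⟩ <;> nlinarith [sq_nonneg (2 * α.a - α.b), sq_nonneg (2 * α.b - α.a)]

theorem ncard_primitiveOfNorm_one : (primitiveOfNorm 1).ncard = 6 := by
  have : primitiveOfNorm 1 =
      (({⟨1, 0⟩, ⟨-1, 0⟩, ⟨0, 1⟩, ⟨0, -1⟩, ⟨1, 1⟩, ⟨-1, -1⟩} : Finset ℤ[ω]) : Set ℤ[ω]) := by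
    ext α
    refine ⟨fun ⟨h, _⟩ => ?_, fun h => ?_⟩
    · obtain ⟨a, b⟩ := α
      simp only [norm_apply, Nat.cast_one] at h
      obtain ⟨hb1, hb2⟩ : -1 ≤ b ∧ b ≤ 1 := by constructor <;> nlinarith [sq_nonneg (2 * a - b)]
      obtain ⟨ha1, ha2⟩ : -1 ≤ a ∧ a ≤ 1 := by constructor <;> nlinarith [sq_nonneg (2 * b - a)]
      interval_cases a <;> interval_cases b <;> simp_all
    · simp only [Finset.coe_insert, Finset.coe_singleton, Set.mem_insert_iff,
        Set.mem_singleton_iff] at h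
      have hα : norm α = 1 := by rcases h with rfl | rfl | rfl | rfl | rfl | rfl <;> rfl
      exact ⟨by simpa using hα, primitive_of_norm_eq_one hα⟩
  rw [this, Set.ncard_coe_finset]
  rfl

theorem mul_mem_primitiveOfNorm {u α : ℤ[ω]} {n : ℕ} (hu : IsUnit u)
    (hα : α ∈ primitiveOfNorm n) : u * α ∈ primitiveOfNorm n :=
  ⟨by rw [map_mul, isUnit_iff_norm_eq_one.1 hu, one_mul, hα.1], hα.2.isUnit_mul hu⟩

section SplitPrime

variable {p : ℕ} {π α : ℤ[ω]}

theorem conj_not_dvd_of_dvd (hp : p.Prime) (hp3 : p ≠ 3) (hπ : norm π = p) (hα : Primitive α)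
    (h : π ∣ α) : ¬ conj π ∣ α := by
  rintro ⟨γ, rfl⟩
  have hγ : π ∣ γ :=
    ((prime_of_norm_eq_prime hp hπ).dvd_or_dvd h).resolve_left (not_dvd_conj hp hp3 hπ)
  refine primitive_iff.1 hα p hp ?_
  rw [← mul_conj_eq_natCast hπ, mul_comm π]
  exact mul_dvd_mul_left _ hγ

theorem pow_dvd_of_dvd (hp : p.Prime) (hp3 : p ≠ 3) (hπ : norm π = p) (hα : Primitive α)
    (h : π ∣ α) {e : ℕ} (he : (p : ℤ) ^ e ∣ norm α) : π ^ e ∣ α := by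
  have hπc : norm (conj π) = p := by rw [norm_conj, hπ]
  have hdvd : conj π ^ e ∣ α * conj α := by
    refine (Dvd.intro_left (π ^ e) ?_).trans (mul_conj α ▸ Int.cast_dvd_cast _ _ he)
    rw [← mul_pow, mul_conj_eq_natCast hπ]
    push_cast; rfl
  simpa using map_dvd conj <| (prime_of_norm_eq_prime hp hπc).pow_dvd_of_dvd_mul_left e
    (conj_not_dvd_of_dvd hp hp3 hπ hα h) hdvd

theorem mem_image_pow_mul_of_dvd (hp : p.Prime) (hp3 : p ≠ 3) (hπ : norm π = p) {e k : ℕ}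
    (hα : α ∈ primitiveOfNorm (p ^ e * k)) (h : π ∣ α) : α ∈ (π ^ e * ·) '' primitiveOfNorm k := by
  obtain ⟨β, rfl⟩ := pow_dvd_of_dvd hp hp3 hπ hα.2 h (e := e) ⟨k, by rw [hα.1]; push_cast; rfl⟩
  refine ⟨β, ⟨?_, hα.2.of_mul_left⟩, rfl⟩
  have hnorm := hα.1
  rw [map_mul, map_pow, hπ, Nat.cast_mul, Nat.cast_pow] at hnorm
  exact mul_left_cancel₀ (pow_ne_zero e (by exact_mod_cast hp.ne_zero)) hnorm

theorem pow_mul_mem_primitiveOfNorm (hp : p.Prime) (hp3 : p ≠ 3) (hπ : norm π = p) {e k : ℕ}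
    (hk : ¬ p ∣ k) {β : ℤ[ω]} (hβ : β ∈ primitiveOfNorm k) :
    π ^ e * β ∈ primitiveOfNorm (p ^ e * k) := by
  refine ⟨by rw [map_mul, map_pow, hπ, hβ.1]; push_cast; rfl, primitive_iff.2 fun q hq hqd => ?_⟩
  have hπc := prime_of_norm_eq_prime hp (π := conj π) (by rw [norm_conj, hπ])
  rcases eq_or_ne q p with rfl | hqp
  · rcases hπc.dvd_or_dvd ((Dvd.intro_left π (mul_conj_eq_natCast hπ)).trans hqd) with h | h
    · exact not_dvd_conj hp hp3 hπ (by simpa using map_dvd conj (hπc.dvd_of_dvd_pow h))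
    · have := map_dvd norm h
      rw [norm_conj, hπ, hβ.1] at this
      exact hk (by exact_mod_cast this)
  · have hcop : IsCoprime (q : ℤ[ω]) (π ^ e) := by
      refine IsCoprime.of_isCoprime_of_dvd_right ?_
        (pow_dvd_pow_of_dvd (Dvd.intro _ (mul_conj_eq_natCast hπ)) e)
      simpa using ((Nat.isCoprime_iff_coprime.2 ((Nat.coprime_primes hq hp).2 hqp)).map
        (Int.castRingHom ℤ[ω])).pow_right (n := e)
    exact primitive_iff.1 hβ.2 q hq (hcop.dvd_of_dvd_mul_left hqd)

theorem primitiveOfNorm_pow_mul (hp : p.Prime) (hp3 : p ≠ 3) (hπ : norm π = p) {e k : ℕ}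
    (he : e ≠ 0) (hk : ¬ p ∣ k) : primitiveOfNorm (p ^ e * k) =
      (π ^ e * ·) '' primitiveOfNorm k ∪ (conj π ^ e * ·) '' primitiveOfNorm k := by
  have hπc : norm (conj π) = p := by rw [norm_conj, hπ]
  ext α
  refine ⟨fun hα => ?_, ?_⟩
  · have hdvd : π ∣ α * conj α := by
      rw [mul_conj, hα.1, Nat.cast_mul, Nat.cast_pow, Int.cast_mul, Int.cast_pow,
        Int.cast_natCast, ← mul_conj_eq_natCast hπ]
      exact dvd_mul_of_dvd_left (dvd_pow (dvd_mul_right _ _) he) _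
    rcases (prime_of_norm_eq_prime hp hπ).dvd_or_dvd hdvd with h | h
    · exact Or.inl (mem_image_pow_mul_of_dvd hp hp3 hπ hα h)
    · exact Or.inr (mem_image_pow_mul_of_dvd hp hp3 hπc hα (by simpa using map_dvd conj h))
  · rintro (⟨β, hβ, rfl⟩ | ⟨β, hβ, rfl⟩)
    · exact pow_mul_mem_primitiveOfNorm hp hp3 hπ hk hβ
    · exact pow_mul_mem_primitiveOfNorm hp hp3 hπc hk hβ

theorem ncard_primitiveOfNorm_pow_mul (hp : p.Prime) (hp3 : p ≠ 3) (hπ : norm π = p) {e k : ℕ}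
    (he : e ≠ 0) (hk : ¬ p ∣ k) :
    (primitiveOfNorm (p ^ e * k)).ncard = 2 * (primitiveOfNorm k).ncard := by
  have hπc : norm (conj π) = p := by rw [norm_conj, hπ]
  have hdisj :
      Disjoint ((π ^ e * ·) '' primitiveOfNorm k) ((conj π ^ e * ·) '' primitiveOfNorm k) := by
    refine Set.disjoint_left.2 ?_
    rintro _ ⟨β, hβ, rfl⟩ ⟨γ, -, hγ : conj π ^ e * γ = π ^ e * β⟩
    exact conj_not_dvd_of_dvd hp hp3 hπ (pow_mul_mem_primitiveOfNorm hp hp3 hπ hk hβ).2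
      (dvd_mul_of_dvd_left (dvd_pow_self π he) β) (hγ ▸ dvd_mul_of_dvd_left (dvd_pow_self _ he) γ)
  have hfin := finite_primitiveOfNorm k
  rw [primitiveOfNorm_pow_mul hp hp3 hπ he hk,
    Set.ncard_union_eq hdisj (hfin.image _) (hfin.image _),
    Set.ncard_image_of_injective _
      (mul_right_injective₀ (pow_ne_zero e (prime_of_norm_eq_prime hp hπ).ne_zero)),
    Set.ncard_image_of_injective _
      (mul_right_injective₀ (pow_ne_zero e (prime_of_norm_eq_prime hp hπc).ne_zero))]
  ring

end SplitPrime

theorem ncard_primitiveOfNorm {m : ℕ} (hm : 0 < m) (hdiv : ∀ p : ℕ, p.Prime → p ∣ m → p % 3 = 1) :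
    (primitiveOfNorm m).ncard = 6 * 2 ^ m.primeFactors.card := by
  induction m using Nat.strong_induction_on with
  | _ m ih =>
  rcases eq_or_ne m 1 with rfl | hm1
  · simp [ncard_primitiveOfNorm_one]
  obtain ⟨p, hp, hpm⟩ := Nat.exists_prime_and_dvd hm1
  obtain ⟨e, k, hk, rfl⟩ := Nat.exists_eq_pow_mul_and_not_dvd hm.ne' p hp.ne_one
  have hp3 := hdiv p hp hpm
  have he : e ≠ 0 := by rintro rfl; simp_all
  have hk0 : 0 < k := Nat.pos_of_mul_pos_left hm
  obtain ⟨π, hπ⟩ := exists_norm_eq_prime hp hp3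
  rw [ncard_primitiveOfNorm_pow_mul hp (by omega) hπ he hk,
    ih k (lt_mul_left hk0 (Nat.one_lt_pow he hp.one_lt)) hk0
      (fun q hq hqk => hdiv q hq (dvd_mul_of_dvd_right hqk _)),
    Nat.primeFactors_mul (pow_ne_zero e hp.ne_zero) hk0.ne', Nat.primeFactors_prime_pow he hp,
    Finset.singleton_union, Finset.card_insert_of_notMem (mt Nat.dvd_of_mem_primeFactors hk),
    pow_succ]
  ring

def ω : ℤ[ω] := ⟨0, 1⟩

@[simp] theorem ω_a : ω.a = 0 := rfl
@[simp] theorem ω_b : ω.b = 1 := rfl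

@[simp] theorem ω_mul_a (x : ℤ[ω]) : (ω * x).a = -x.b := by simp
@[simp] theorem ω_mul_b (x : ℤ[ω]) : (ω * x).b = x.a - x.b := by simp

theorem ω_pow_three : ω ^ 3 = 1 := rfl

theorem isUnit_ω : IsUnit ω := isUnit_iff_norm_eq_one.2 rfl

theorem ω_mul_ω_mul_ω_mul (x : ℤ[ω]) : ω * (ω * (ω * x)) = x := by
  rw [← mul_assoc, ← mul_assoc, ← pow_three', ω_pow_three, one_mul]

/-- The elements with even `b` are those of `ℤ[√-3]`, since `√-3 = 1 + 2 ω`. -/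
def primitiveOfNormEvenB (n : ℕ) : Set ℤ[ω] := {α ∈ primitiveOfNorm n | 2 ∣ α.b}

theorem ncard_primitiveOfNorm_eq_three_mul (n : ℕ) :
    (primitiveOfNorm n).ncard = 3 * (primitiveOfNormEvenB n).ncard := by
  set f : Fin 3 × ℤ[ω] → ℤ[ω] := fun x => ω ^ (x.1 : ℕ) * x.2
  have hinj : Set.InjOn f (Set.univ ×ˢ primitiveOfNormEvenB n) := by
    rintro ⟨j, α⟩ ⟨-, hα, hαb⟩ ⟨k, β⟩ ⟨-, hβ, hβb⟩ h
    have hα2 := hα.2.not_two_dvd_and_two_dvd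
    have hβ2 := hβ.2.not_two_dvd_and_two_dvd
    simp only [f] at hαb hβb hα2 hβ2 h ⊢
    fin_cases j <;> fin_cases k <;>
      simp [EisensteinInt.ext_iff, pow_succ', mul_assoc, -mul_a, -mul_b] at h ⊢ <;> omega
  have himage : f '' (Set.univ ×ˢ primitiveOfNormEvenB n) = primitiveOfNorm n := by
    refine subset_antisymm (Set.image_subset_iff.2 fun x hx =>
      mul_mem_primitiveOfNorm (isUnit_ω.pow _) hx.2.1) fun α hα => ?_
    have := hα.2.not_two_dvd_and_two_dvd
    have hω {β : ℤ[ω]} := mul_mem_primitiveOfNorm (α := β) (n := n) isUnit_ω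
    by_cases hb : 2 ∣ α.b
    · exact ⟨(0, α), ⟨trivial, hα, hb⟩, by simp [f]⟩
    by_cases ha : 2 ∣ α.a
    · refine ⟨(1, ω * (ω * α)), ⟨trivial, hω (hω hα), by simp [-mul_a, -mul_b]; omega⟩, ?_⟩
      simp [f, ω_mul_ω_mul_ω_mul]
    · refine ⟨(2, ω * α), ⟨trivial, hω hα, by simp [-mul_a, -mul_b]; omega⟩, ?_⟩
      simp [f, pow_two, mul_assoc, ω_mul_ω_mul_ω_mul]
  rw [← himage, hinj.ncard_image, Set.ncard_prod, Set.ncard_univ, Nat.card_eq_fintype_card,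
    Fintype.card_fin]

theorem primitive_mk_iff {x y : ℤ} (hx : 2 ∣ x) (hy : ¬ 2 ∣ y) :
    Primitive ⟨x + y, 2 * y⟩ ↔ IsCoprime (2 * x) y := by
  have h2y : IsCoprime 2 y := (Prime.coprime_iff_not_dvd Int.prime_two).2 hy
  have hxy2 : IsCoprime (x + y) 2 := ((Prime.coprime_iff_not_dvd Int.prime_two).2 (by omega)).symm
  have hxy : IsCoprime (x + y) y ↔ IsCoprime x y := by
    simpa using IsCoprime.add_mul_left_left_iff (x := x) (y := y) (z := 1)
  rw [Primitive, IsCoprime.mul_right_iff, IsCoprime.mul_left_iff, hxy]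
  exact ⟨fun h => ⟨h2y, h.2⟩, fun h => ⟨hxy2, h.2⟩⟩

theorem two_dvd_and_not_two_dvd_and_not_three_dvd {x y n : ℤ} (h : x ^ 2 + 3 * y ^ 2 = n)
    (hn4 : n % 4 = 3) (hn3 : n % 3 = 1) : 2 ∣ x ∧ ¬ 2 ∣ y ∧ ¬ 3 ∣ x := by
  have h2 : 2 ∣ x ∧ ¬ 2 ∣ y := by
    rcases Int.even_or_odd' x with ⟨u, rfl | rfl⟩ <;>
      rcases Int.even_or_odd' y with ⟨v, rfl | rfl⟩ <;> ring_nf at h <;> omega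
  refine ⟨h2.1, h2.2, fun ⟨t, ht⟩ => ?_⟩
  subst ht; ring_nf at h; omega

/-- `x + y √-3 = (x + y) + 2 y ω` corresponds to `(p, q) = (2 x, y)`. -/
theorem image_primitiveOfNormEvenB {m : ℕ} (hm4 : m % 4 = 3) (hm3 : m % 3 = 1) :
    (fun α : ℤ[ω] => (2 * α.a - α.b, α.b / 2)) '' primitiveOfNormEvenB m =
      {pq : ℤ × ℤ | IsCoprime pq.1 pq.2 ∧ 4 * (m : ℤ) = pq.1 ^ 2 + 12 * pq.2 ^ 2 ∧
        4 ∣ pq.1 ∧ ¬ 3 ∣ pq.1} := by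
  have hpar {x y : ℤ} (h : x ^ 2 + 3 * y ^ 2 = m) :=
    two_dvd_and_not_two_dvd_and_not_three_dvd h (by omega) (by omega)
  ext ⟨p, q⟩
  constructor
  · rintro ⟨⟨a, b⟩, ⟨⟨hnorm, hprim⟩, y, rfl⟩, heq⟩
    obtain ⟨x, rfl⟩ : ∃ x, a = x + y := ⟨a - y, by ring⟩
    simp only [Prod.mk.injEq] at heq
    obtain ⟨rfl, rfl⟩ : p = 2 * x ∧ q = y := by omega
    have hm : x ^ 2 + 3 * q ^ 2 = m := by rw [← hnorm, norm_apply]; ring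
    obtain ⟨hx2, hq2, hx3⟩ := hpar hm
    exact ⟨(primitive_mk_iff hx2 hq2).1 hprim, by rw [← hm]; ring, by omega, by omega⟩
  · rintro ⟨hcop, hm, ⟨t, rfl⟩, -⟩
    have hm' : (2 * t) ^ 2 + 3 * q ^ 2 = m := by linarith
    obtain ⟨-, hq2, -⟩ := hpar hm'
    refine ⟨⟨2 * t + q, 2 * q⟩, ⟨⟨by rw [norm_apply, ← hm']; ring,
      (primitive_mk_iff (by omega) hq2).2 (by rwa [← mul_assoc])⟩, by simp⟩, ?_⟩
    simp only [Prod.mk.injEq]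
    omega

theorem ncard_coprime_sq_add_twelve_mul_sq {m : ℕ} (hm4 : m % 4 = 3) (hm3 : m % 3 = 1) :
    {pq : ℤ × ℤ | IsCoprime pq.1 pq.2 ∧ 4 * (m : ℤ) = pq.1 ^ 2 + 12 * pq.2 ^ 2 ∧
      4 ∣ pq.1 ∧ ¬ 3 ∣ pq.1}.ncard = (primitiveOfNormEvenB m).ncard := by
  rw [← image_primitiveOfNormEvenB hm4 hm3, Set.InjOn.ncard_image]
  rintro α ⟨-, hα⟩ β ⟨-, hβ⟩ h
  simp only [Prod.mk.injEq] at h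
  ext <;> omega

end EisensteinInt

theorem stmt_9_general (m N : ℕ) (hN : N = 4 * m) (h7 : m % 12 = 7)
    (hdiv : ∀ p : ℕ, p.Prime → p ∣ m → p % 12 = 1 ∨ p % 12 = 7) :
    {pq : ℤ × ℤ | IsCoprime pq.1 pq.2 ∧ (N : ℤ) = pq.1 ^ 2 + 12 * pq.2 ^ 2 ∧
        4 ∣ pq.1 ∧ ¬ (3 ∣ pq.1)}.ncard = 2 ^ N.primeFactors.card := by
  have hcount := EisensteinInt.ncard_primitiveOfNorm (m := m) (by omega) fun p hp hpm => by
    have := hdiv p hp hpm; omega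
  rw [EisensteinInt.ncard_primitiveOfNorm_eq_three_mul] at hcount
  have hN' : (N : ℤ) = 4 * m := by rw [hN]; push_cast; rfl
  rw [hN', EisensteinInt.ncard_coprime_sq_add_twelve_mul_sq (by omega) (by omega), hN,
    Nat.primeFactors_four_mul (by omega),
    Finset.card_insert_of_notMem fun h => by have := Nat.dvd_of_mem_primeFactors h; omega, pow_succ]
  omega

theorem stmt_9 (m N : ℕ) (hN : N = 4 * m) (hm : 0 < m) (h7 : m % 12 = 7)
    (hdiv : ∀ p : ℕ, p.Prime → p ∣ m → p % 12 = 1 ∨ p % 12 = 7) :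
    {pq : ℤ × ℤ | IsCoprime pq.1 pq.2 ∧ (N : ℤ) = pq.1 ^ 2 + 12 * pq.2 ^ 2 ∧
        4 ∣ pq.1 ∧ ¬ (3 ∣ pq.1)}.ncard = 2 ^ N.primeFactors.card :=
  stmt_9_general m N hN h7 hdiv
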